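/- There is a constant C > 0, independent of μ and of v, such that the derivative of the scattering function satisfies the uniform bound 0 ≤ f'(r) ≤ (C/(r² + R₀²)) · (𝔞₀^μ + ζ₀ (𝔠₀ − 𝔞₀^μ)/μ) for all r > 0. (One may take C = 2.) -/

import Mathlib

/-! Since `μ m'' = v m ≥ 0`, the solution `m` is convex with `m(0) = 0` and `m' = 1` beyond `R₀`,
so `0 ≤ m' ≤ 1`. The derivative of `f = m / r` is `w / r²`, where `w = r m' - m` is the Wronskian
of `m` with the free solution `r ↦ r`. Convexity and `m(0) = 0` give `w ≥ 0`. Since `w' = r m'' ≥ 0`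
and `w = 𝔞₀^μ` beyond `R₀`, also `w ≤ 𝔞₀^μ`, which gives the bound for `r ≥ R₀` as
`r² + R₀² ≤ 2 r²`. For `r ≤ R₀` one integrates `w' = r m'' ≤ r ⨆ v · m(R₀) / μ` from `0`, where
`w` tends to `0`, and uses `r² + R₀² ≤ 2 R₀²`. -/

open Set MeasureTheory

/-- A zero-energy scattering solution `m` for the radial potential `v` supported in `[0, R₀]`
with semiclassical parameter `μ`: it satisfies `μ m'' = v m` on `(0,∞)`, is continuous on
`[0,∞)` and continuously differentiable on `(0,∞)`, with `m(0) = 0`, `m > 0` on `(0,∞)`, and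
`m(r) = r - 𝔞₀^μ` for `r ≥ R₀`, where `𝔞₀^μ := R₀ - m(R₀)` is the scattering length. -/
structure ZeroEnergyScattering (v : ℝ → ℝ) (R₀ μ : ℝ) (m : ℝ → ℝ) : Prop where
  cont : ContinuousOn m (Set.Ici 0)
  diff : ∀ r ∈ Set.Ioi (0 : ℝ), DifferentiableAt ℝ m r
  derivCont : ContinuousOn (deriv m) (Set.Ioi 0)
  diff2 : ∀ r ∈ Set.Ioi (0 : ℝ), DifferentiableAt ℝ (deriv m) r
  ode : ∀ r ∈ Set.Ioi (0 : ℝ), μ * deriv (deriv m) r = v r * m r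
  zero : m 0 = 0
  pos : ∀ r ∈ Set.Ioi (0 : ℝ), 0 < m r
  radiation : ∀ r, R₀ ≤ r → m r = r - (R₀ - m R₀)

noncomputable def wronskian (m : ℝ → ℝ) (r : ℝ) : ℝ := r * deriv m r - m r

lemma deriv_div_id_eq_wronskian_div_sq {m : ℝ → ℝ} {r : ℝ} (hm : DifferentiableAt ℝ m r)
    (hr : r ≠ 0) : deriv (fun s => m s / s) r = wronskian m r / r ^ 2 := by
  rw [(hm.hasDerivAt.fun_div (hasDerivAt_id' r) hr).deriv, wronskian]
  ring

lemma hasDerivAt_wronskian {m : ℝ → ℝ} {r : ℝ} (hm : DifferentiableAt ℝ m r)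
    (hm' : DifferentiableAt ℝ (deriv m) r) :
    HasDerivAt (wronskian m) (r * deriv (deriv m) r) r := by
  have h := ((hasDerivAt_id' r).fun_mul hm'.hasDerivAt).fun_sub hm.hasDerivAt
  rwa [one_mul, add_sub_right_comm, sub_self, zero_add] at h

lemma ConvexOn.wronskian_nonneg {m : ℝ → ℝ} {r : ℝ} (hconv : ConvexOn ℝ (Ici 0) m)
    (h0 : m 0 = 0) (hr : 0 < r) (hm : DifferentiableAt ℝ m r) : 0 ≤ wronskian m r := by
  have hslope := hconv.slope_le_deriv self_mem_Ici (mem_Ici.2 hr.le) hr hm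
  rw [slope_def_field, h0, sub_zero, sub_zero, div_le_iff₀ hr] at hslope
  rw [wronskian]
  linarith

lemma div_sq_le_two_div_add_sq_mul {w a K r R : ℝ} (hr : 0 < r) (hw : 0 ≤ w) (hwa : w ≤ a)
    (hwK : r ≤ R → w ≤ K * r ^ 2) (hK : 0 ≤ K) (hR : 0 ≤ R) :
    w / r ^ 2 ≤ 2 / (r ^ 2 + R ^ 2) * (a + R ^ 2 * K) := by
  have hr2 : 0 < r ^ 2 := by positivity
  rw [div_mul_eq_mul_div, div_le_div_iff₀ hr2 (by positivity)]
  rcases le_total r R with hrR | hRr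
  · have h2 : r ^ 2 ≤ R ^ 2 := pow_le_pow_left₀ hr.le hrR 2
    nlinarith [hwK hrR]
  · have h2 : R ^ 2 ≤ r ^ 2 := pow_le_pow_left₀ hR hRr 2
    nlinarith [mul_le_mul_of_nonneg_left h2 hw, mul_nonneg hK (sq_nonneg R)]

lemma MonotoneOn.le_of_eq_of_lt {f : ℝ → ℝ} {R c r : ℝ} (hf : MonotoneOn f (Ioi 0))
    (hc : ∀ s, R < s → f s = c) (hr : 0 < r) : f r ≤ c := by
  have hs : r ≤ max r R + 1 := by linarith [le_max_left r R]
  calc f r ≤ f (max r R + 1) := hf hr (hr.trans_le hs) hs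
    _ = c := hc _ (by linarith [le_max_right r R])

namespace ZeroEnergyScattering

variable {v : ℝ → ℝ} {R₀ μ : ℝ} {m : ℝ → ℝ} (hm : ZeroEnergyScattering v R₀ μ m)
include hm

lemma deriv_deriv_eq (hμ : 0 < μ) {r : ℝ} (hr : 0 < r) :
    deriv (deriv m) r = v r * m r / μ := by
  rw [← hm.ode r hr, mul_div_cancel_left₀ _ hμ.ne']

lemma deriv_deriv_nonneg (hμ : 0 < μ) (hv : ∀ r, 0 ≤ v r) {r : ℝ} (hr : 0 < r) :
    0 ≤ deriv (deriv m) r := by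
  rw [hm.deriv_deriv_eq hμ hr]
  exact div_nonneg (mul_nonneg (hv r) (hm.pos r hr).le) hμ.le

lemma monotoneOn_deriv (hμ : 0 < μ) (hv : ∀ r, 0 ≤ v r) : MonotoneOn (deriv m) (Ioi 0) := by
  refine monotoneOn_of_deriv_nonneg (convex_Ioi 0)
    (fun r hr => (hm.diff2 r hr).continuousAt.continuousWithinAt) ?_ ?_ <;> rw [interior_Ioi]
  · exact fun r hr => (hm.diff2 r hr).differentiableWithinAt
  · exact fun r hr => hm.deriv_deriv_nonneg hμ hv hr

lemma convexOn (hμ : 0 < μ) (hv : ∀ r, 0 ≤ v r) : ConvexOn ℝ (Ici 0) m := by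
  refine MonotoneOn.convexOn_of_deriv (convex_Ici 0) hm.cont ?_ ?_ <;> rw [interior_Ici]
  · exact fun r hr => (hm.diff r hr).differentiableWithinAt
  · exact hm.monotoneOn_deriv hμ hv

lemma deriv_eq_one {r : ℝ} (hr : R₀ < r) : deriv m r = 1 := by
  have hlin : m =ᶠ[nhds r] fun s => s - (R₀ - m R₀) := by
    filter_upwards [Ioi_mem_nhds hr] with s hs using hm.radiation s hs.le
  rw [hlin.deriv_eq]
  exact ((hasDerivAt_id' r).sub_const _).deriv

lemma deriv_le_one (hμ : 0 < μ) (hv : ∀ r, 0 ≤ v r) {r : ℝ} (hr : 0 < r) : deriv m r ≤ 1 :=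
  (hm.monotoneOn_deriv hμ hv).le_of_eq_of_lt (fun _ => hm.deriv_eq_one) hr

lemma wronskian_eq_of_lt {r : ℝ} (hr : R₀ < r) : wronskian m r = R₀ - m R₀ := by
  rw [wronskian, hm.deriv_eq_one hr, hm.radiation r hr.le]
  ring

lemma wronskian_nonneg (hμ : 0 < μ) (hv : ∀ r, 0 ≤ v r) {r : ℝ} (hr : 0 < r) :
    0 ≤ wronskian m r :=
  (hm.convexOn hμ hv).wronskian_nonneg hm.zero hr (hm.diff r hr)

lemma wronskian_le_self (hμ : 0 < μ) (hv : ∀ r, 0 ≤ v r) {r : ℝ} (hr : 0 < r) :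
    wronskian m r ≤ r := by
  have := mul_le_mul_of_nonneg_left (hm.deriv_le_one hμ hv hr) hr.le
  rw [wronskian]
  linarith [hm.pos r hr]

lemma monotoneOn_wronskian (hμ : 0 < μ) (hv : ∀ r, 0 ≤ v r) :
    MonotoneOn (wronskian m) (Ioi 0) := by
  have hderiv : ∀ r ∈ Ioi (0 : ℝ), HasDerivAt (wronskian m) (r * deriv (deriv m) r) r :=
    fun r hr => hasDerivAt_wronskian (hm.diff r hr) (hm.diff2 r hr)
  refine monotoneOn_of_hasDerivWithinAt_nonneg (f' := fun r => r * deriv (deriv m) r)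
    (convex_Ioi 0) (fun r hr => (hderiv r hr).continuousAt.continuousWithinAt) ?_ ?_ <;>
    rw [interior_Ioi]
  · exact fun r hr => (hderiv r hr).hasDerivWithinAt
  · exact fun r hr => mul_nonneg hr.le (hm.deriv_deriv_nonneg hμ hv hr)

lemma wronskian_le_scatteringLength (hμ : 0 < μ) (hv : ∀ r, 0 ≤ v r) {r : ℝ} (hr : 0 < r) :
    wronskian m r ≤ R₀ - m R₀ :=
  (hm.monotoneOn_wronskian hμ hv).le_of_eq_of_lt (fun _ => hm.wronskian_eq_of_lt) hr

lemma monotoneOn (hμ : 0 < μ) (hv : ∀ r, 0 ≤ v r) : MonotoneOn m (Ici 0) := by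
  refine monotoneOn_of_deriv_nonneg (convex_Ici 0) hm.cont ?_ ?_ <;> rw [interior_Ici]
  · exact fun r hr => (hm.diff r hr).differentiableWithinAt
  · intro r hr
    have hw := hm.wronskian_nonneg hμ hv hr
    rw [wronskian] at hw
    exact (pos_of_mul_pos_right ((hm.pos r hr).trans_le (by linarith)) hr.le).le

lemma deriv_deriv_le (hμ : 0 < μ) (hv : ∀ r, 0 ≤ v r) (hV : BddAbove (range v)) {r : ℝ}
    (hr : 0 < r) (hrR : r ≤ R₀) : deriv (deriv m) r ≤ (⨆ s, v s) * m R₀ / μ := by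
  rw [hm.deriv_deriv_eq hμ hr]
  refine div_le_div_of_nonneg_right (mul_le_mul (le_ciSup hV r) ?_ (hm.pos r hr).le
    ((hv r).trans (le_ciSup hV r))) hμ.le
  exact hm.monotoneOn hμ hv (mem_Ici.2 hr.le) (mem_Ici.2 (hr.le.trans hrR)) hrR

lemma wronskian_le_mul_sq (hμ : 0 < μ) (hv : ∀ r, 0 ≤ v r) {K r : ℝ} (hr : 0 < r)
    (hK : ∀ s ∈ Ioc 0 r, deriv (deriv m) s ≤ K) : wronskian m r ≤ K * r ^ 2 := by
  have hK0 : 0 ≤ K := (hm.deriv_deriv_nonneg hμ hv hr).trans (hK r ⟨hr, le_rfl⟩)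
  refine le_of_forall_pos_le_add fun ε hε => ?_
  set r₀ := min ε r
  have hr₀ : 0 < r₀ := lt_min hε hr
  have hr₀r : r₀ ≤ r := min_le_right ε r
  have hderiv : ∀ s ∈ Icc r₀ r, HasDerivAt (wronskian m) (s * deriv (deriv m) s) s := fun s hs =>
    hasDerivAt_wronskian (hm.diff s (hr₀.trans_le hs.1)) (hm.diff2 s (hr₀.trans_le hs.1))
  have hgrowth : wronskian m r - wronskian m r₀ ≤ K * r * (r - r₀) := by
    refine (convex_Icc r₀ r).image_sub_le_mul_sub_of_deriv_le
      (fun s hs => (hderiv s hs).continuousAt.continuousWithinAt) ?_ ?_ r₀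
      ⟨le_rfl, hr₀r⟩ r ⟨hr₀r, le_rfl⟩ hr₀r <;> rw [interior_Icc]
    · exact fun s hs => (hderiv s (Ioo_subset_Icc_self hs)).differentiableAt.differentiableWithinAt
    · intro s hs
      rw [(hderiv s (Ioo_subset_Icc_self hs)).deriv]
      have hs0 : 0 < s := hr₀.trans hs.1
      calc s * deriv (deriv m) s ≤ s * K := by gcongr; exact hK s ⟨hs0, hs.2.le⟩
        _ ≤ K * r := by rw [mul_comm]; gcongr; exact hs.2.le
  nlinarith [hm.wronskian_le_self hμ hv hr₀, min_le_left ε r,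
    mul_nonneg (mul_nonneg hK0 hr.le) hr₀.le]

end ZeroEnergyScattering

/-- **Uniform gradient bound for the scattering function.**  There is a universal constant
`C > 0` (independent of `μ` and of `v`; one may take `C = 2`) such that
`0 ≤ f'(r) ≤ C/(r² + R₀²) · (𝔞₀^μ + ζ₀ (𝔠₀ - 𝔞₀^μ)/μ)` for all `r > 0`, where
`f(r) = m(r)/r`, `𝔠₀ = R₀` and `ζ₀ = R₀² ⨆ᵣ v(r)`. -/
theorem scattering_function_uniform_gradient_bound :
    ∃ C > (0 : ℝ), ∀ R₀ μ : ℝ, 0 < R₀ → 0 < μ →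
      ∀ v : ℝ → ℝ, Measurable v → (∀ r, 0 ≤ v r) → BddAbove (Set.range v) →
        (∀ r, R₀ ≤ r → v r = 0) →
      ∀ m : ℝ → ℝ, ZeroEnergyScattering v R₀ μ m →
      ∀ r, 0 < r →
        0 ≤ deriv (fun s => m s / s) r ∧
        deriv (fun s => m s / s) r ≤
          C / (r ^ 2 + R₀ ^ 2) *
            ((R₀ - m R₀) + R₀ ^ 2 * (⨆ r', v r') * (R₀ - (R₀ - m R₀)) / μ) := by
  refine ⟨2, two_pos, fun R₀ μ hR₀ hμ v _ hv hV _ m hm r hr => ?_⟩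
  rw [deriv_div_id_eq_wronskian_div_sq (hm.diff r hr) hr.ne']
  have hw := hm.wronskian_nonneg hμ hv hr
  refine ⟨div_nonneg hw (sq_nonneg r), ?_⟩
  have hK : 0 ≤ (⨆ s, v s) * m R₀ / μ :=
    div_nonneg (mul_nonneg ((hv 0).trans (le_ciSup hV 0)) (hm.pos R₀ hR₀).le) hμ.le
  convert div_sq_le_two_div_add_sq_mul hr hw (hm.wronskian_le_scatteringLength hμ hv hr)
    (fun hrR => hm.wronskian_le_mul_sq hμ hv hr
      fun s hs => hm.deriv_deriv_le hμ hv hV hs.1 (hs.2.trans hrR)) hK hR₀.le using 2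
  ring
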